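/- Let 𝔖 be an arithmetic cofinite G-semimatroid. Then m_𝔖 satisfies the divisibility axiom (A.1.1): for every A∈𝒞̲ and a₀∈A with rk̲(A∖{a₀})=rk̲(A), the integer m_𝔖(A) divides m_𝔖(A∖{a₀}). -/

import Mathlib

open scoped Classical Pointwise


/-- A finitary semimatroid on the ground set `S`: a nonempty, finite-dimensional
simplicial complex `C` of finite subsets of `S` (containing all singletons), together
with a rank function satisfying (R1)-(R3), (CR1), (CR2). -/
structure FinSemimatroid (S : Type*) [DecidableEq S] where
  C : Set (Finset S)
  rk : Finset S → ℕ
  nonempty : C.Nonempty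
  downClosed : ∀ ⦃X Y : Finset S⦄, X ∈ C → Y ⊆ X → Y ∈ C
  singleton_mem : ∀ x : S, ({x} : Finset S) ∈ C
  finDim : ∃ d : ℕ, ∀ X ∈ C, X.card ≤ d
  r1 : ∀ X ∈ C, rk X ≤ X.card
  r2 : ∀ ⦃X Y : Finset S⦄, X ∈ C → Y ∈ C → X ⊆ Y → rk X ≤ rk Y
  r3 : ∀ ⦃X Y : Finset S⦄, X ∈ C → Y ∈ C → X ∪ Y ∈ C →
    rk (X ∪ Y) + rk (X ∩ Y) ≤ rk X + rk Y
  cr1 : ∀ ⦃X Y : Finset S⦄, X ∈ C → Y ∈ C → rk X = rk (X ∩ Y) → X ∪ Y ∈ C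
  cr2 : ∀ ⦃X Y : Finset S⦄, X ∈ C → Y ∈ C → rk X < rk Y →
    ∃ y ∈ Y, y ∉ X ∧ insert y X ∈ C

namespace FinSemimatroid

variable {S : Type*} [DecidableEq S]

/-- The closure of a central set. -/
def cl (M : FinSemimatroid S) (X : Finset S) : Set S :=
  {y : S | insert y X ∈ M.C ∧ M.rk (insert y X) = M.rk X}

/-- A flat is a closed central set. -/
def IsFlat (M : FinSemimatroid S) (X : Finset S) : Prop :=
  X ∈ M.C ∧ M.cl X = (X : Set S)

/-- The poset of flats, ordered by inclusion. -/
abbrev Flats (M : FinSemimatroid S) : Type _ := {X : Finset S // M.IsFlat X}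

/-- A simple finitary semimatroid. -/
def Simple (M : FinSemimatroid S) : Prop :=
  (∀ x : S, M.rk {x} = 1) ∧
    ∀ x y : S, x ≠ y → ({x, y} : Finset S) ∈ M.C → M.rk {x, y} = 2

end FinSemimatroid

/-- A poset is chain-finite if all its chains are finite. -/
def ChainFinite (L : Type*) [PartialOrder L] : Prop :=
  ∀ c : Set L, IsChain (· ≤ ·) c → c.Finite

/-- An atom of a bounded-below poset: an element covering the minimum. -/
def PosetAtom {L : Type*} [PartialOrder L] (a : L) : Prop :=
  ∃ bot : L, IsBot bot ∧ bot ⋖ a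

/-- `L` (with rank function `rk`) is a finite geometric lattice (finite, bounded below,
a lattice, ranked by `rk`, atomic and semimodular) with at most `N` atoms. -/
def IsFinGeomLatticeAtMost (L : Type*) [PartialOrder L] (rk : L → ℕ) (N : ℕ) : Prop :=
  Finite L ∧
    ∃ bot : L, IsBot bot ∧
      (∀ x y : L, ∃ m : L, IsGLB {x, y} m) ∧
      (∀ x y : L, ∃ j : L, IsLUB {x, y} j) ∧
      (∀ x y : L, x ⋖ y → rk y = rk x + 1) ∧
      (∀ x : L, ∃ A : Set L, (∀ a ∈ A, bot ⋖ a) ∧ IsLUB A x) ∧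
      (∀ x y m j : L, IsGLB {x, y} m → IsLUB {x, y} j → rk j + rk m ≤ rk x + rk y) ∧
      Nat.card {a : L | bot ⋖ a} ≤ N
/-- A `G`-semimatroid: an action of `G` on a finitary semimatroid, preserving
centrality and rank. -/
structure GSemimatroid (G S : Type*) [Group G] [MulAction G S] [DecidableEq S]
    extends FinSemimatroid S where
  smul_mem : ∀ (g : G) ⦃X : Finset S⦄, X ∈ C → X.image (g • ·) ∈ C
  rk_smul : ∀ (g : G) ⦃X : Finset S⦄, X ∈ C → rk (X.image (g • ·)) = rk X

namespace GSemimatroid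

variable {G S : Type*} [Group G] [MulAction G S] [DecidableEq S]

/-- The set of orbits `E_𝔖 = S/G`. -/
abbrev E (G S : Type*) [Group G] [MulAction G S] : Type _ :=
  Quotient (MulAction.orbitRel G S)

/-- The orbit of a point. -/
def orbOf (G : Type*) {S : Type*} [Group G] [MulAction G S] (x : S) : E G S :=
  Quotient.mk (MulAction.orbitRel G S) x

/-- `X̲`: the set of orbits met by `X`. -/
def under (G : Type*) {S : Type*} [Group G] [MulAction G S] (X : Finset S) :
    Set (E G S) :=
  orbOf G '' (X : Set S)

variable (M : GSemimatroid G S)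

/-- `𝒞̲ = {X̲ : X ∈ 𝒞}`. -/
def CQ : Set (Set (E G S)) := {A | ∃ X ∈ M.C, under G X = A}

/-- `rk̲ A = max { rk X : X ∈ 𝒞, X̲ ⊆ A }`. -/
noncomputable def rkQ (A : Set (E G S)) : ℕ :=
  sSup {n : ℕ | ∃ X ∈ M.C, under G X ⊆ A ∧ M.rk X = n}

/-- `𝒞_A`: the central sets lying over `A`. -/
def CA (A : Set (E G S)) : Set (Finset S) := {X | X ∈ M.C ∧ under G X = A}

/-- The type of central sets. -/
abbrev Cen : Type _ := {X : Finset S // X ∈ M.C}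

/-- The `G`-orbit relation on central sets. -/
def cenRel (X Y : M.Cen) : Prop := ∃ g : G, X.1.image (g • ·) = Y.1

/-- The set `𝒞/G` of orbits of central sets. -/
def COrb : Type _ := Quot M.cenRel

/-- The action is cofinite if `𝒞/G` is finite. -/
def Cofinite : Prop := Finite M.COrb

/-- `m_𝔖(A) = |𝒞_A / G|`. -/
noncomputable def m (A : Set (E G S)) : ℕ :=
  Nat.card {O : M.COrb // ∃ X : M.Cen, under G X.1 = A ∧ Quot.mk M.cenRel X = O}

def WeaklyTranslative : Prop :=
  ∀ (g : G) (x : S), ({x, g • x} : Finset S) ∈ M.C →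
    M.rk {x, g • x} = M.rk ({x} : Finset S)

def Translative : Prop :=
  ∀ (g : G) (x : S), ({x, g • x} : Finset S) ∈ M.C → g • x = x

def Centered : Prop := ∃ X ∈ M.C, under G X = (Set.univ : Set (E G S))

def Normal (_M : GSemimatroid G S) : Prop :=
  ∀ x : S, Subgroup.Normal (MulAction.stabilizer G x)

def AlmostArithmetic : Prop := M.Translative ∧ M.Normal

/-- The action is arithmetic: almost-arithmetic, and for every central `X` the set
`W(X) ⊆ Γ^X` is a subgroup (expressed via representative families of group elements). -/
def Arithmetic : Prop :=
  M.AlmostArithmetic ∧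
    ∀ ⦃X : Finset S⦄, X ∈ M.C → ∀ γ δ : S → G,
      X.image (fun x => γ x • x) ∈ M.C → X.image (fun x => δ x • x) ∈ M.C →
        X.image (fun x => (γ x * δ x) • x) ∈ M.C ∧
          X.image (fun x => (γ x)⁻¹ • x) ∈ M.C

/-- Remove from `X` all elements of the orbit `a₀`. -/
noncomputable def strip (a₀ : E G S) (X : Finset S) : Finset S :=
  X.filter (fun x => orbOf G x ≠ a₀)

/-- The Tutte polynomial of a `G`-semimatroid, as a function `ℤ × ℤ → ℤ`. -/
noncomputable def Tutte (x y : ℤ) : ℤ :=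
  ∑ᶠ A ∈ M.CQ, (M.m A : ℤ) * (x - 1) ^ (M.rkQ Set.univ - M.rkQ A) *
    (y - 1) ^ (Nat.card A - M.rkQ A)

end GSemimatroid

open GSemimatroid


/-! Fix a central `X` over `A` and let `Y` be `X` without its point in the orbit `a₀`.
Translativity makes `γ ↦ γ.X` a bijection from `W(X) ≤ Γ^X` onto the central sets over `X̲`,
with `g • γ.X = (h_X(g) γ).X`; hence `m(X̲) = [W(X) : H(X)]`, where we work with preimages in
`S → G` and `H(X)` is the preimage of `h_X(G)`. The rank condition and (CR1) give
`H(Y) ∩ W(X) = H(X) ∩ W(X)`. As `H(Y) = G · K` with `K` the kernel of `(S → G) → Γ^Y`, this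
yields `m(X̲) = [W(X) K : H(Y)]`, and `H(Y) ≤ W(X) K ≤ W(Y)` makes it a divisor of
`[W(Y) : H(Y)] = m(Y̲)`. -/

open MulAction

theorem Subgroup.index_eq_natCard_of_surjective {Γ T : Type*} [Group Γ] (H : Subgroup Γ)
    {f : Γ → T} (hf : Function.Surjective f) (hfib : ∀ v w, f v = f w ↔ v⁻¹ * w ∈ H) :
    H.index = Nat.card T :=
  (Nat.card_congr (Quotient.congrRight fun v w =>
    (QuotientGroup.leftRel_apply.trans (hfib v w).symm))).trans
    (Nat.card_congr (Setoid.quotientKerEquivOfSurjective f hf))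

theorem Subgroup.comap_relIndex_sup_ker {Γ Γ' : Type*} [Group Γ] [Group Γ'] (f : Γ →* Γ')
    (H : Subgroup Γ') (A : Subgroup Γ) :
    (H.comap f).relIndex (A ⊔ f.ker) = (H.comap f).relIndex A := by
  rw [relIndex_comap, relIndex_comap, map_sup, map_ker_self, sup_bot_eq]

namespace FinSemimatroid

variable {S : Type*} [DecidableEq S] (M : FinSemimatroid S)

theorem union_mem_of_subset_inter_of_rk_eq {X X' Y : Finset S} (hX : X ∈ M.C)
    (hX' : X' ∈ M.C) (hY : Y ⊆ X ∩ X') (hrk : M.rk Y = M.rk X) : X ∪ X' ∈ M.C := by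
  have hI : X ∩ X' ∈ M.C := M.downClosed hX Finset.inter_subset_left
  refine M.cr1 hX hX' (le_antisymm ?_ (M.r2 hI hX Finset.inter_subset_left))
  exact hrk ▸ M.r2 (M.downClosed hI hY) hI hY

end FinSemimatroid

namespace GSemimatroid

variable {G S : Type*} [Group G] [MulAction G S]

theorem orbOf_smul (g : G) (x : S) : orbOf G (g • x) = orbOf G x :=
  Quotient.sound (mem_orbit x g)

theorem orbOf_eq_orbOf_iff {x y : S} : orbOf G x = orbOf G y ↔ ∃ g : G, g • y = x :=
  Quotient.eq.trans (orbitRel_apply.trans mem_orbit_iff)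

theorem mem_under {X : Finset S} {a : E G S} : a ∈ under G X ↔ ∃ x ∈ X, orbOf G x = a := by
  simp [under]

theorem under_strip (a₀ : E G S) (X : Finset S) :
    under G (strip a₀ X) = under G X \ {a₀} := by
  ext a
  simp only [mem_under, strip, Finset.mem_filter, Set.mem_sdiff, Set.mem_singleton_iff]
  constructor
  · rintro ⟨x, ⟨hx, hxa⟩, rfl⟩
    exact ⟨⟨x, hx, rfl⟩, hxa⟩
  · rintro ⟨⟨x, hx, rfl⟩, hxa⟩
    exact ⟨x, ⟨hx, hxa⟩, rfl⟩

section Gamma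

variable [∀ x : S, (stabilizer G x).Normal]

/-- The projection of `S → G` onto `Γ^X = Π_{x ∈ X} G ⧸ stab x`. -/
def toGamma (X : Finset S) : (S → G) →* ((x : X) → G ⧸ stabilizer G (x : S)) :=
  MonoidHom.pi fun x => (QuotientGroup.mk' _).comp (Pi.evalMonoidHom (fun _ => G) (x : S))

theorem toGamma_eq_toGamma_iff {X : Finset S} {v w : S → G} :
    toGamma X v = toGamma X w ↔ ∀ x ∈ X, v x • x = w x • x := by
  simp only [funext_iff, toGamma, MonoidHom.pi_apply, MonoidHom.comp_apply,
    QuotientGroup.mk'_apply, Pi.evalMonoidHom_apply, QuotientGroup.eq, mem_stabilizer_iff,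
    mul_smul, inv_smul_eq_iff, Subtype.forall]
  exact forall₂_congr fun _ _ => eq_comm

/-- The preimage of `h_X(G) ≤ Γ^X`. -/
def translations (X : Finset S) : Subgroup (S → G) :=
  ((toGamma X).comp (Pi.constMonoidHom S G)).range.comap (toGamma X)

theorem mem_translations {X : Finset S} {γ : S → G} :
    γ ∈ translations X ↔ ∃ g : G, ∀ x ∈ X, g • x = γ x • x := by
  simp only [translations, Subgroup.mem_comap, MonoidHom.mem_range, MonoidHom.comp_apply,
    toGamma_eq_toGamma_iff, Pi.constMonoidHom_apply, Function.const_apply]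

theorem translations_eq_sup_ker (X : Finset S) :
    translations X = (Pi.constMonoidHom S G).range ⊔ (toGamma X).ker := by
  rw [translations, MonoidHom.range_comp, Subgroup.comap_map_eq]

theorem translations_anti {X Y : Finset S} (hYX : Y ⊆ X) :
    (translations X : Subgroup (S → G)) ≤ translations Y :=
  fun _ hγ => by
    obtain ⟨g, hg⟩ := mem_translations.mp hγ
    exact mem_translations.mpr ⟨g, fun x hx => hg x (hYX hx)⟩

end Gamma

variable [DecidableEq S]

/-- `act X γ` is the paper's `γ.X`. -/
def act (X : Finset S) (γ : S → G) : Finset S := X.image fun x => γ x • x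

theorem under_act (X : Finset S) (γ : S → G) : under G (act X γ) = under G X := by
  rw [under, act, Finset.coe_image, ← Set.image_comp]
  exact Set.image_congr fun x _ => orbOf_smul (γ x) x

theorem act_const_mul (X : Finset S) (g : G) (γ : S → G) :
    act X (Function.const S g * γ) = (act X γ).image (g • ·) := by
  simp only [act, Finset.image_image, Function.comp_def, Pi.mul_apply, Function.const_apply,
    mul_smul]

variable (M : GSemimatroid G S)

theorem eq_of_orbOf_eq (htr : M.Translative) {X : Finset S} (hX : X ∈ M.C) {x y : S}
    (hx : x ∈ X) (hy : y ∈ X) (h : orbOf G x = orbOf G y) : x = y := by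
  obtain ⟨g, rfl⟩ := orbOf_eq_orbOf_iff.mp h
  exact htr g y (M.downClosed hX (by simp [Finset.insert_subset_iff, hx, hy]))

theorem rk_le_of_under_subset (htr : M.Translative) {X Y : Finset S} (hX : X ∈ M.C)
    (hY : Y ∈ M.C) (h : under G X ⊆ under G Y) : M.rk X ≤ M.rk Y := by
  by_contra! hlt
  obtain ⟨x, hxX, hxY, hins⟩ := M.cr2 hY hX hlt
  obtain ⟨y, hyY, hyx⟩ := mem_under.mp (h (mem_under.mpr ⟨x, hxX, rfl⟩))
  obtain rfl := eq_of_orbOf_eq M htr hins (Finset.mem_insert_of_mem hyY)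
    (Finset.mem_insert_self x Y) hyx
  exact hxY hyY

theorem rkQ_under (htr : M.Translative) {X : Finset S} (hX : X ∈ M.C) :
    M.rkQ (under G X) = M.rk X :=
  IsGreatest.csSup_eq ⟨⟨X, hX, subset_rfl, rfl⟩, by
    rintro _ ⟨Y, hY, hYX, rfl⟩
    exact rk_le_of_under_subset M htr hY hX hYX⟩

theorem act_eq_act_iff (htr : M.Translative) {X : Finset S} (hX : X ∈ M.C) {v w : S → G} :
    act X v = act X w ↔ ∀ x ∈ X, v x • x = w x • x := by
  refine ⟨fun h x hx => ?_, fun h => Finset.image_congr fun x hx => h x hx⟩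
  have hvx : v x • x ∈ act X w := h ▸ Finset.mem_image_of_mem _ hx
  obtain ⟨y, hy, hyx⟩ := Finset.mem_image.mp hvx
  obtain rfl := eq_of_orbOf_eq M htr hX hy hx (by rw [← orbOf_smul (w y) y, hyx, orbOf_smul])
  exact hyx.symm

theorem exists_act_eq (htr : M.Translative) {X Y : Finset S} (hY : Y ∈ M.C)
    (h : under G Y = under G X) : ∃ γ : S → G, act X γ = Y := by
  have hex : ∀ x ∈ X, ∃ g : G, g • x ∈ Y := by
    intro x hx
    have hxY : orbOf G x ∈ under G Y := h ▸ mem_under.mpr ⟨x, hx, rfl⟩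
    obtain ⟨y, hy, hyx⟩ := mem_under.mp hxY
    obtain ⟨g, rfl⟩ := orbOf_eq_orbOf_iff.mp hyx
    exact ⟨g, hy⟩
  choose! γ hγ using hex
  refine ⟨γ, (Finset.image_subset_iff.mpr hγ).antisymm fun y hy => ?_⟩
  have hyX : orbOf G y ∈ under G X := h ▸ mem_under.mpr ⟨y, hy, rfl⟩
  obtain ⟨x, hx, hxy⟩ := mem_under.mp hyX
  rw [← eq_of_orbOf_eq M htr hY (hγ x hx) hy (by rw [orbOf_smul, hxy])]
  exact Finset.mem_image_of_mem _ hx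

/-- `W(X)`, pulled back to `S → G`. -/
def centralSubgroup (har : M.Arithmetic) {X : Finset S} (hX : X ∈ M.C) : Subgroup (S → G) where
  carrier := {γ | act X γ ∈ M.C}
  one_mem' := by simpa [act] using hX
  mul_mem' ha hb := (har.2 hX _ _ ha hb).1
  inv_mem' ha := (har.2 hX _ _ ha ha).2

theorem mem_centralSubgroup (har : M.Arithmetic) {X : Finset S} (hX : X ∈ M.C) {γ : S → G} :
    γ ∈ centralSubgroup M har hX ↔ act X γ ∈ M.C := Iff.rfl

theorem range_const_le_centralSubgroup (har : M.Arithmetic) {X : Finset S} (hX : X ∈ M.C) :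
    (Pi.constMonoidHom S G).range ≤ centralSubgroup M har hX := by
  rintro _ ⟨g, rfl⟩
  exact M.smul_mem g hX

theorem centralSubgroup_anti (har : M.Arithmetic) {X Y : Finset S} (hX : X ∈ M.C)
    (hYX : Y ⊆ X) : centralSubgroup M har hX ≤ centralSubgroup M har (M.downClosed hX hYX) :=
  fun _ hγ => M.downClosed hγ (Finset.image_subset_image hYX)

theorem cenRel_equivalence : Equivalence M.cenRel where
  refl X := ⟨1, by simp⟩
  symm := by
    rintro X Y ⟨g, hg⟩
    exact ⟨g⁻¹, by simp [← hg, Finset.image_image, Function.comp_def]⟩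
  trans := by
    rintro X Y Z ⟨g, hg⟩ ⟨h, hh⟩
    exact ⟨h * g, by simp [← hh, ← hg, Finset.image_image, Function.comp_def, mul_smul]⟩

theorem mk_cenRel_eq_iff {X Y : M.Cen} :
    Quot.mk M.cenRel X = Quot.mk M.cenRel Y ↔ M.cenRel X Y :=
  Quot.eq.trans (cenRel_equivalence M).eqvGen_iff

section Normal

variable [∀ x : S, (stabilizer G x).Normal]

theorem ker_toGamma_le_centralSubgroup (har : M.Arithmetic) {X : Finset S} (hX : X ∈ M.C) :
    (toGamma X).ker ≤ centralSubgroup M har hX := by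
  intro γ hγ
  have hfix : ∀ x ∈ X, γ x • x = x := by
    simpa using toGamma_eq_toGamma_iff.mp (hγ.trans (map_one (toGamma X)).symm)
  rw [mem_centralSubgroup, act, Finset.image_congr hfix, Finset.image_id']
  exact hX

theorem mk_act_eq_mk_act_iff (htr : M.Translative) {X : Finset S} (hX : X ∈ M.C)
    {v w : S → G} (hv : act X v ∈ M.C) (hw : act X w ∈ M.C) :
    Quot.mk M.cenRel ⟨act X v, hv⟩ = Quot.mk M.cenRel ⟨act X w, hw⟩ ↔
      w * v⁻¹ ∈ translations X := by
  simp only [mk_cenRel_eq_iff, cenRel, ← act_const_mul, act_eq_act_iff M htr hX,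
    ← toGamma_eq_toGamma_iff, translations, Subgroup.mem_comap, MonoidHom.mem_range,
    MonoidHom.comp_apply, map_mul, map_inv, eq_mul_inv_iff_mul_eq]
  rfl

theorem m_under_eq_relIndex (har : M.Arithmetic) {X : Finset S} (hX : X ∈ M.C) :
    M.m (under G X) = (translations X).relIndex (centralSubgroup M har hX) := by
  set W := centralSubgroup M har hX
  -- `w ↦ w⁻¹` turns the right cosets `H w`, which index the orbits, into left cosets.
  let f : W → {O : M.COrb // ∃ Y : M.Cen, under G Y.1 = under G X ∧ Quot.mk M.cenRel Y = O} :=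
    fun w => ⟨Quot.mk M.cenRel ⟨act X (w⁻¹ : W), (mem_centralSubgroup M har hX).mp w⁻¹.2⟩, _,
      under_act X _, rfl⟩
  refine (Subgroup.index_eq_natCard_of_surjective _ (f := f) ?_ fun v w => ?_).symm
  · rintro ⟨_, Y, hY, rfl⟩
    obtain ⟨γ, hγ⟩ := exists_act_eq M har.1.1 Y.2 hY
    have hγW : γ ∈ W := (mem_centralSubgroup M har hX).mpr (hγ ▸ Y.2)
    refine ⟨(⟨γ, hγW⟩ : W)⁻¹, Subtype.ext ?_⟩
    simp only [f, inv_inv]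
    exact congrArg _ (Subtype.ext hγ)
  · refine Subtype.ext_iff.trans ((mk_act_eq_mk_act_iff M har.1.1 hX _ _).trans ?_)
    rw [Subgroup.mem_subgroupOf, ← inv_mem_iff]
    simp

/-- `γ.Y ⊆ γ.X ∩ gX` has the rank of `γ.X`, so (CR1) makes `γ.X ∪ gX` central, and
translativity identifies `γ x • x` with `g • x`. -/
theorem mem_translations_of_rkQ_eq (har : M.Arithmetic) {X Y : Finset S} (hX : X ∈ M.C)
    (hYX : Y ⊆ X) (hrk : M.rkQ (under G Y) = M.rkQ (under G X)) {γ : S → G}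
    (hγ : γ ∈ centralSubgroup M har hX) (hγY : γ ∈ translations Y) :
    γ ∈ translations X := by
  have htr := har.1.1
  obtain ⟨g, hg⟩ := mem_translations.mp hγY
  have hγYC : act Y γ ∈ M.C := M.downClosed hγ (Finset.image_subset_image hYX)
  have hrk' : M.rk (act Y γ) = M.rk (act X γ) := by
    rw [← rkQ_under M htr hγYC, ← rkQ_under M htr hγ, under_act, under_act, hrk]
  have hsub : act Y γ ⊆ act X γ ∩ X.image (g • ·) :=
    Finset.subset_inter (Finset.image_subset_image hYX) <| Finset.image_subset_iff.mpr
      fun y hy => hg y hy ▸ Finset.mem_image_of_mem _ (hYX hy)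
  have hU := M.union_mem_of_subset_inter_of_rk_eq hγ (M.smul_mem g hX) hsub hrk'
  refine mem_translations.mpr ⟨g, fun x hx => eq_of_orbOf_eq M htr hU ?_ ?_ ?_⟩
  · exact Finset.mem_union_right _ (Finset.mem_image_of_mem _ hx)
  · exact Finset.mem_union_left _ (Finset.mem_image_of_mem _ hx)
  · rw [orbOf_smul, orbOf_smul]

theorem translations_inf_centralSubgroup (har : M.Arithmetic) {X Y : Finset S} (hX : X ∈ M.C)
    (hYX : Y ⊆ X) (hrk : M.rkQ (under G Y) = M.rkQ (under G X)) :
    translations X ⊓ centralSubgroup M har hX = translations Y ⊓ centralSubgroup M har hX :=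
  le_antisymm (inf_le_inf_right _ (translations_anti hYX))
    fun _ ⟨hγY, hγ⟩ => ⟨mem_translations_of_rkQ_eq M har hX hYX hrk hγ hγY, hγ⟩

end Normal

end GSemimatroid

theorem arithmetic_divisibility_A11_general
    {G S : Type*} [Group G] [MulAction G S] [DecidableEq S]
    (M : GSemimatroid G S) (har : M.Arithmetic) :
    ∀ A : Set (E G S), A ∈ M.CQ → ∀ a₀ ∈ A,
      M.rkQ (A \ {a₀}) = M.rkQ A → M.m A ∣ M.m (A \ {a₀}) := by
  rintro _ ⟨X, hX, rfl⟩ a₀ - hrk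
  have : ∀ x : S, (stabilizer G x).Normal := har.1.2
  have hYX : strip a₀ X ⊆ X := Finset.filter_subset _ _
  have hY : strip a₀ X ∈ M.C := M.downClosed hX hYX
  rw [← under_strip] at hrk ⊢
  set U := centralSubgroup M har hX ⊔ (toGamma (strip a₀ X)).ker
  have hTU : translations (strip a₀ X) ≤ U := by
    rw [translations_eq_sup_ker]
    exact sup_le_sup_right (range_const_le_centralSubgroup M har hX) _
  have hUW : U ≤ centralSubgroup M har hY :=
    sup_le (centralSubgroup_anti M har hX hYX) (ker_toGamma_le_centralSubgroup M har hY)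
  calc M.m (under G X) = (translations (strip a₀ X)).relIndex U := by
        rw [m_under_eq_relIndex M har hX, ← Subgroup.inf_relIndex_right,
          translations_inf_centralSubgroup M har hX hYX hrk, Subgroup.inf_relIndex_right,
          translations, Subgroup.comap_relIndex_sup_ker]
    _ ∣ M.m (under G (strip a₀ X)) := by
        rw [m_under_eq_relIndex M har hY]
        exact Dvd.intro _ (Subgroup.relIndex_mul_relIndex _ _ _ hTU hUW)

/-- For an arithmetic cofinite `G`-semimatroid, the multiplicity
function satisfies the divisibility axiom (A.1.1): if `rk̲(A \ {a₀}) = rk̲ A` then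
`m_𝔖(A) ∣ m_𝔖(A \ {a₀})`. -/
theorem arithmetic_divisibility_A11
    {G S : Type*} [Group G] [MulAction G S] [DecidableEq S]
    (M : GSemimatroid G S) (hcof : M.Cofinite) (har : M.Arithmetic) :
    ∀ A : Set (E G S), A ∈ M.CQ → ∀ a₀ ∈ A,
      M.rkQ (A \ {a₀}) = M.rkQ A → M.m A ∣ M.m (A \ {a₀}) :=
  arithmetic_divisibility_A11_general M har
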